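/- arXiv:1810.00906 — 4 statements merged into one kernel-verified Lean document; each statement's English description precedes it below -/
import Mathlib

section
/- Let σ be a positive definite n×n complex matrix, V an n×n complex matrix, and ω a real number. If σ V σ⁻¹ = e^{-ω} V, then the commutator [V, log σ] = V (log σ) - (log σ) V equals ω·V. -/
open Matrix
open scoped ComplexOrder

/-- Matrix logarithm via continuous functional calculus. -/
noncomputable def mlog {n : ℕ} (A : Matrix (Fin n) (Fin n) ℂ) : Matrix (Fin n) (Fin n) ℂ :=
  cfc Real.log A

/-- If `V` is an eigenvector of the modular operator `Δ_σ(A) = σ A σ⁻¹` with eigenvalue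
`e^{-ω}`, then `[V, log σ] = ω • V`. -/
theorem commutator_log_of_modular_eigenvector {n : ℕ}
    (σ V : Matrix (Fin n) (Fin n) ℂ) (hσ : σ.PosDef) (ω : ℝ)
    (h : σ * V * σ⁻¹ = (Real.exp (-ω) : ℂ) • V) :
    V * mlog σ - mlog σ * V = (ω : ℂ) • V := by
  have hA : σ.IsHermitian := hσ.1
  set U : Matrix (Fin n) (Fin n) ℂ := (hA.eigenvectorUnitary : Matrix (Fin n) (Fin n) ℂ) with hUdef
  have hU1 : star U * U = 1 := Matrix.mem_unitaryGroup_iff'.mp hA.eigenvectorUnitary.2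
  have hU2 : U * star U = 1 := Matrix.mem_unitaryGroup_iff.mp hA.eigenvectorUnitary.2
  set D : Matrix (Fin n) (Fin n) ℂ :=
    diagonal (fun i => (hA.eigenvalues i : ℂ)) with hDdef
  set Λ : Matrix (Fin n) (Fin n) ℂ :=
    diagonal (fun i => (Real.log (hA.eigenvalues i) : ℂ)) with hΛdef
  have hσeq : σ = U * D * star U := hA.spectral_theorem
  have hlog : mlog σ = U * Λ * star U := by
    rw [mlog, hA.cfc_eq]; rfl
  -- from h : σ * V = c • (V * σ)
  have hc : σ * V = (Real.exp (-ω) : ℂ) • (V * σ) := by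
    have := congrArg (· * σ) h
    simpa [Matrix.mul_assoc, Matrix.nonsing_inv_mul σ hσ.det_pos.ne'.isUnit,
      Matrix.smul_mul] using this
  set W : Matrix (Fin n) (Fin n) ℂ := star U * V * U with hWdef
  have hV : V = U * W * star U := by
    rw [hWdef]
    calc V = (U * star U) * V * (U * star U) := by rw [hU2]; simp
    _ = U * (star U * V * U) * star U := by noncomm_ring
  have hDW : D * W = (Real.exp (-ω) : ℂ) • (W * D) := by
    have hD : star U * σ * U = D := by
      rw [hσeq]
      calc star U * (U * D * star U) * U = (star U * U) * D * (star U * U) := by noncomm_ring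
      _ = D := by rw [hU1]; simp
    rw [← hD, hWdef]
    calc (star U * σ * U) * (star U * V * U)
        = star U * (σ * (U * star U) * V) * U := by noncomm_ring
      _ = star U * (σ * V) * U := by rw [hU2]; simp [Matrix.mul_assoc]
      _ = star U * ((Real.exp (-ω) : ℂ) • (V * σ)) * U := by rw [hc]
      _ = (Real.exp (-ω) : ℂ) • (star U * (V * (U * star U) * σ) * U) := by
          rw [hU2]; simp [Matrix.mul_smul, Matrix.smul_mul, Matrix.mul_assoc]
      _ = (Real.exp (-ω) : ℂ) • ((star U * V * U) * (star U * σ * U)) := by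
          congr 1; noncomm_ring
  have key : W * Λ - Λ * W = (ω : ℂ) • W := by
    ext i j
    have hij := congrFun (congrFun hDW i) j
    simp only [hDdef, Matrix.diagonal_mul, Matrix.mul_diagonal,
      Matrix.smul_apply, smul_eq_mul] at hij
    by_cases hW : W i j = 0
    · simp [hΛdef, Matrix.mul_diagonal, Matrix.diagonal_mul, hW]
    · have hlam : (hA.eigenvalues i : ℂ) = (Real.exp (-ω) : ℂ) * (hA.eigenvalues j : ℂ) := by
        have hij' : (hA.eigenvalues i : ℂ) * W i j
            = ((Real.exp (-ω) : ℂ) * (hA.eigenvalues j : ℂ)) * W i j := by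
          rw [hij]; ring
        exact mul_right_cancel₀ hW hij'
      have hlamr : hA.eigenvalues i = Real.exp (-ω) * hA.eigenvalues j := by
        exact_mod_cast hlam
      have hlogr : Real.log (hA.eigenvalues j) - Real.log (hA.eigenvalues i) = ω := by
        rw [hlamr, Real.log_mul (Real.exp_ne_zero _) (hσ.eigenvalues_pos j).ne',
          Real.log_exp]
        ring
      simp only [Matrix.sub_apply, hΛdef, Matrix.mul_diagonal, Matrix.diagonal_mul,
        Matrix.smul_apply, smul_eq_mul]
      have : (Real.log (hA.eigenvalues j) : ℂ) - (Real.log (hA.eigenvalues i) : ℂ) = (ω : ℂ) := by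
        exact_mod_cast congrArg (Complex.ofReal ·) hlogr
      calc W i j * (Real.log (hA.eigenvalues j) : ℂ)
            - (Real.log (hA.eigenvalues i) : ℂ) * W i j
          = ((Real.log (hA.eigenvalues j) : ℂ) - (Real.log (hA.eigenvalues i) : ℂ)) * W i j := by
            ring
        _ = (ω : ℂ) * W i j := by rw [this]
  rw [hlog, hV]
  calc (U * W * star U) * (U * Λ * star U) - (U * Λ * star U) * (U * W * star U)
      = U * (W * (star U * U) * Λ) * star U - U * (Λ * (star U * U) * W) * star U := by
        noncomm_ring
    _ = U * (W * Λ - Λ * W) * star U := by rw [hU1]; simp [Matrix.mul_sub, Matrix.sub_mul,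
        Matrix.mul_assoc]
    _ = (ω : ℂ) • (U * W * star U) := by
        rw [key]; simp [Matrix.mul_smul, Matrix.smul_mul, Matrix.mul_assoc]
end

section
/- Chain rule identity: for any n×n complex matrix V, any positive definite n×n matrix X, and any ω ∈ ℝ, one has ∫₀¹ e^{ω(s-1/2)} X^s ( V·log(e^{-ω/2} X) − log(e^{ω/2} X)·V ) X^{1-s} ds = e^{-ω/2} V X − e^{ω/2} X V. -/
/-!
Conjugating by the eigenvector unitary `U` of `X = U diag(d) U*` turns every functional-calculus
factor into a diagonal matrix, so in the eigenbasis the integrand is the entrywise product of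
`W = U* V U` with the scalar functions `e^{ω(s-1/2)} d_p^s d_q^{1-s} (log d_q - log d_p - ω)`.
Each of these is minus the `s`-derivative of `e^{ω(s-1/2)} d_p^s d_q^{1-s}`, so it integrates to
`e^{-ω/2} d_q - e^{ω/2} d_p`, the factor by which `e^{-ω/2} V X - e^{ω/2} X V` multiplies `W p q`
in the same basis.
-/

open Matrix
open scoped ComplexOrder

attribute [local instance] Matrix.frobeniusNormedAddCommGroup Matrix.frobeniusNormedSpace

/-- Real matrix power via continuous functional calculus. -/
noncomputable def mpow {n : ℕ} (A : Matrix (Fin n) (Fin n) ℂ) (s : ℝ) :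
    Matrix (Fin n) (Fin n) ℂ :=
  cfc (fun x : ℝ => x ^ s) A

theorem integral_exp_mul_rpow_mul_rpow_mul_log_sub (ω a b : ℝ) (ha : 0 < a) (hb : 0 < b) :
    ∫ s in (0:ℝ)..1,
        Real.exp (ω * (s - 1/2)) * a ^ s * b ^ (1 - s) * (Real.log b - Real.log a - ω)
      = Real.exp (-ω/2) * b - Real.exp (ω/2) * a := by
  have hderiv : ∀ s ∈ Set.uIcc (0:ℝ) 1, HasDerivAt
      (fun t => -(Real.exp (ω * (t - 1/2)) * a ^ t * b ^ (1 - t)))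
      (Real.exp (ω * (s - 1/2)) * a ^ s * b ^ (1 - s) * (Real.log b - Real.log a - ω)) s := by
    intro s _
    have hexp := ((hasDerivAt_id' s).sub_const (1/2 : ℝ)).const_mul ω |>.exp
    have hpow_b := ((hasDerivAt_id' s).const_sub 1).const_rpow hb
    exact ((hexp.fun_mul (Real.hasStrictDerivAt_const_rpow ha s).hasDerivAt).fun_mul
      hpow_b).fun_neg.congr_deriv (by ring)
  have hcont : Continuous fun s : ℝ =>
      Real.exp (ω * (s - 1/2)) * a ^ s * b ^ (1 - s) * (Real.log b - Real.log a - ω) := by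
    fun_prop (disch := positivity)
  rw [intervalIntegral.integral_eq_sub_of_hasDerivAt hderiv (hcont.intervalIntegrable 0 1)]
  norm_num
  ring_nf

theorem Matrix.intervalIntegral_map_of {m n 𝕜 G F : Type*} [Fintype m] [Fintype n]
    [DecidableEq m] [DecidableEq n] [RCLike 𝕜] [NormedAddCommGroup G] [NormedSpace ℝ G]
    [NormedSpace 𝕜 G] [CompleteSpace G] [FunLike F (Matrix m n 𝕜) G]
    [LinearMapClass F 𝕜 (Matrix m n 𝕜) G]
    (φ : F) {a b : ℝ} {f : m → n → ℝ → 𝕜}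
    (hf : ∀ i j, IntervalIntegrable (f i j) MeasureTheory.volume a b) :
    ∫ s in a..b, φ (of fun i j => f i j s) = φ (of fun i j => ∫ s in a..b, f i j s) := by
  have hexpand : ∀ g : m → n → 𝕜,
      φ (of g) = ∑ p : m × n, g p.1 p.2 • φ (single p.1 p.2 1) := by
    intro g
    rw [← sum_sum_single g, ← Fintype.sum_prod_type', map_sum]
    refine Finset.sum_congr rfl fun p _ => ?_
    rw [← map_smul, smul_single, smul_eq_mul, mul_one]
  simp only [hexpand]
  rw [intervalIntegral.integral_finsetSum fun p _ =>
    (hf p.1 p.2).smul_continuousOn continuousOn_const]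
  exact Finset.sum_congr rfl fun p _ => intervalIntegral.integral_smul_const _ _

theorem mlog_exp_smul {n : ℕ} {X : Matrix (Fin n) (Fin n) ℂ} (hX : X.PosDef) (c : ℝ) :
    mlog ((Real.exp c : ℂ) • X) = cfc (fun x => c + Real.log x) X := by
  have hspec : ∀ x ∈ spectrum ℝ X, x ≠ 0 := by
    rw [hX.isHermitian.spectrum_real_eq_range_eigenvalues]
    rintro - ⟨i, rfl⟩
    exact (hX.eigenvalues_pos i).ne'
  have hlog : ContinuousOn Real.log ((Real.exp c * ·) '' spectrum ℝ X) :=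
    Real.continuousOn_log.mono fun y ⟨x, hx, hxy⟩ =>
      hxy ▸ mul_ne_zero (Real.exp_pos c).ne' (hspec x hx)
  calc mlog ((Real.exp c : ℂ) • X)
      = cfc (fun x => Real.log (Real.exp c * x)) X :=
        (cfc_comp_const_mul (Real.exp c) Real.log X hlog hX.isHermitian).symm
    _ = cfc (fun x => c + Real.log x) X := cfc_congr fun x hx => by
        rw [Real.log_mul (Real.exp_pos c).ne' (hspec x hx), Real.log_exp]

/-- Chain rule identity:
`∫₀¹ e^{ω(s-1/2)} X^s (V log(e^{-ω/2}X) - log(e^{ω/2}X) V) X^{1-s} ds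
  = e^{-ω/2} V X - e^{ω/2} X V`. -/
theorem chain_rule_identity {n : ℕ}
    (V X : Matrix (Fin n) (Fin n) ℂ) (hX : X.PosDef) (ω : ℝ) :
    ∫ s in (0:ℝ)..1, Real.exp (ω * (s - 1/2)) •
        (mpow X s *
          (V * mlog ((Real.exp (-ω/2) : ℂ) • X) - mlog ((Real.exp (ω/2) : ℂ) • X) * V) *
          mpow X (1 - s))
      = (Real.exp (-ω/2) : ℂ) • (V * X) - (Real.exp (ω/2) : ℂ) • (X * V) := by
  have hA := hX.isHermitian
  set φ := Unitary.conjStarAlgAut ℂ _ hA.eigenvectorUnitary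
  set d := hA.eigenvalues
  set W := φ.symm V
  have hcfc (f : ℝ → ℝ) : cfc f X = φ (diagonal fun i => (f (d i) : ℂ)) := hA.cfc_eq f
  have hV : V = φ W := (φ.apply_symm_apply V).symm
  have hX' : X = φ (diagonal fun i => (d i : ℂ)) := hA.spectral_theorem
  have hintegrand (s : ℝ) : Real.exp (ω * (s - 1/2)) •
      (mpow X s *
        (V * mlog ((Real.exp (-ω/2) : ℂ) • X) - mlog ((Real.exp (ω/2) : ℂ) • X) * V) *
        mpow X (1 - s))
      = φ (of fun p q => ((Real.exp (ω * (s - 1/2)) * d p ^ s * d q ^ (1 - s) *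
          (Real.log (d q) - Real.log (d p) - ω) : ℝ) : ℂ) * W p q) := by
    rw [mpow, mpow, mlog_exp_smul hX, mlog_exp_smul hX, hcfc, hcfc, hcfc, hcfc, hV,
      ← Complex.coe_smul, ← map_mul, ← map_mul, ← map_sub, ← map_mul, ← map_mul, ← map_smul]
    congr 1
    ext p q
    simp only [Matrix.sub_apply, Matrix.smul_apply, diagonal_mul, mul_diagonal, smul_eq_mul,
      of_apply]
    push_cast
    ring
  have hrhs : (Real.exp (-ω/2) : ℂ) • (V * X) - (Real.exp (ω/2) : ℂ) • (X * V)
      = φ (of fun p q => ((Real.exp (-ω/2) * d q - Real.exp (ω/2) * d p : ℝ) : ℂ) * W p q) := by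
    rw [hV, hX', ← map_mul, ← map_mul, ← map_smul, ← map_smul, ← map_sub]
    congr 1
    ext p q
    simp only [Matrix.sub_apply, Matrix.smul_apply, diagonal_mul, mul_diagonal, smul_eq_mul,
      of_apply]
    push_cast
    ring
  rw [intervalIntegral.integral_congr fun s _ => hintegrand s, intervalIntegral_map_of, hrhs]
  · congr 1
    ext p q
    rw [of_apply, of_apply, intervalIntegral.integral_mul_const, intervalIntegral.integral_ofReal,
      integral_exp_mul_rpow_mul_rpow_mul_log_sub ω _ _ (hX.eigenvalues_pos p)
        (hX.eigenvalues_pos q)]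
  · intro p q
    apply Continuous.intervalIntegrable
    fun_prop (disch := exact (hX.eigenvalues_pos _).ne')
end

section
/- Gronwall-type decay for the order-2 sandwiched Rényi divergence: let D : [0,∞) → [0,∞) be differentiable and λ > 0, and suppose D'(t) ≤ −2λ(1 − e^{−D(t)}) for all t ≥ 0. Then for all t ≥ 0, D(t) ≤ log(1 + (e^{D(0)} − 1)·e^{−2λt}) ≤ (e^{D(0)} − 1)·e^{−2λt}. -/
/-- Grönwall-type decay: if `D` is differentiable, nonnegative on `[0,∞)`, and satisfies
`D' ≤ -2λ(1 - e^{-D})`, then `D(t) ≤ log(1 + (e^{D(0)}-1) e^{-2λt}) ≤ (e^{D(0)}-1) e^{-2λt}`. -/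
theorem gronwall_renyi_two_decay (D : ℝ → ℝ) (l : ℝ) (hl : 0 < l)
    (hdiff : ∀ t, 0 ≤ t → DifferentiableAt ℝ D t)
    (hnonneg : ∀ t, 0 ≤ t → 0 ≤ D t)
    (hineq : ∀ t, 0 ≤ t → deriv D t ≤ -2 * l * (1 - Real.exp (-(D t)))) :
    ∀ t, 0 ≤ t →
      D t ≤ Real.log (1 + (Real.exp (D 0) - 1) * Real.exp (-2 * l * t)) ∧
      Real.log (1 + (Real.exp (D 0) - 1) * Real.exp (-2 * l * t))
        ≤ (Real.exp (D 0) - 1) * Real.exp (-2 * l * t) := by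
  set f : ℝ → ℝ := fun t => (Real.exp (D t) - 1) * Real.exp (2 * l * t) with hf
  have hderiv : ∀ t, 0 ≤ t → HasDerivAt f
      ((deriv D t * Real.exp (D t)) * Real.exp (2 * l * t)
        + (Real.exp (D t) - 1) * (Real.exp (2 * l * t) * (2 * l))) t := by
    intro t ht
    have h1 : HasDerivAt (fun t => Real.exp (D t) - 1)
        (deriv D t * Real.exp (D t)) t := by
      have := ((hdiff t ht).hasDerivAt.exp)
      simpa [mul_comm] using this.sub_const 1
    have h2 : HasDerivAt (fun t => Real.exp (2 * l * t))
        (Real.exp (2 * l * t) * (2 * l)) t := by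
      have : HasDerivAt (fun t : ℝ => 2 * l * t) (2 * l) t := by
        simpa using (hasDerivAt_id t).const_mul (2 * l)
      simpa [mul_comm] using this.exp
    exact h1.mul h2
  have hcont : ContinuousOn f (Set.Ici 0) := by
    intro t ht
    exact ((hderiv t ht).continuousAt).continuousWithinAt
  have hanti : AntitoneOn f (Set.Ici 0) := by
    apply antitoneOn_of_deriv_nonpos (convex_Ici 0) hcont
    · intro t ht
      rw [interior_Ici] at ht
      exact ((hderiv t (le_of_lt ht)).differentiableAt).differentiableWithinAt
    · intro t ht
      rw [interior_Ici] at ht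
      have ht' : (0:ℝ) ≤ t := le_of_lt ht
      rw [(hderiv t ht').deriv]
      have key : deriv D t * Real.exp (D t) ≤ -(2 * l) * (Real.exp (D t) - 1) := by
        have := mul_le_mul_of_nonneg_right (hineq t ht') (Real.exp_pos (D t)).le
        calc deriv D t * Real.exp (D t)
            ≤ (-2 * l * (1 - Real.exp (-(D t)))) * Real.exp (D t) := this
          _ = -(2 * l) * (Real.exp (D t) - 1) := by
              rw [Real.exp_neg]
              field_simp
      have epos := (Real.exp_pos (2 * l * t)).le
      nlinarith [mul_le_mul_of_nonneg_right key epos]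
  intro t ht
  have hft : f t ≤ f 0 := hanti Set.self_mem_Ici ht ht
  have hf0 : f 0 = Real.exp (D 0) - 1 := by simp [hf]
  -- rewrite f t ≤ f 0 as exp(D t) ≤ 1 + (exp(D 0) - 1) * exp (-2*l*t)
  have hexp : Real.exp (D t) ≤ 1 + (Real.exp (D 0) - 1) * Real.exp (-2 * l * t) := by
    have h2 : (Real.exp (D t) - 1) * Real.exp (2 * l * t) ≤ Real.exp (D 0) - 1 := by
      rw [← hf0]; exact hft
    have h3 : Real.exp (-2 * l * t) = (Real.exp (2 * l * t))⁻¹ := by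
      rw [← Real.exp_neg]; ring_nf
    have hpos : (0:ℝ) < Real.exp (2 * l * t) := Real.exp_pos _
    rw [h3]
    rw [← sub_le_iff_le_add']
    calc Real.exp (D t) - 1
        = ((Real.exp (D t) - 1) * Real.exp (2 * l * t)) * (Real.exp (2 * l * t))⁻¹ := by
          field_simp
      _ ≤ (Real.exp (D 0) - 1) * (Real.exp (2 * l * t))⁻¹ := by
          apply mul_le_mul_of_nonneg_right h2 (by positivity)
  have hx : 0 ≤ (Real.exp (D 0) - 1) * Real.exp (-2 * l * t) := by
    have : (0:ℝ) ≤ Real.exp (D 0) - 1 := by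
      have := Real.one_le_exp (hnonneg 0 le_rfl)
      linarith
    positivity
  constructor
  · calc D t = Real.log (Real.exp (D t)) := (Real.log_exp _).symm
      _ ≤ Real.log (1 + (Real.exp (D 0) - 1) * Real.exp (-2 * l * t)) :=
        Real.log_le_log (Real.exp_pos _) hexp
  · have := Real.log_le_sub_one_of_pos
      (show (0:ℝ) < 1 + (Real.exp (D 0) - 1) * Real.exp (-2 * l * t) by linarith)
    linarith
end

section
/- Limit of the weight coefficients: for distinct positive reals λ_k ≠ λ_j, the quantity f(α) := (α−1)·(λ_k^{1/α} − λ_j^{1/α})/(λ_j^{(1−α)/α} − λ_k^{(1−α)/α}) converges to max(λ_k, λ_j) as α → 0⁺, and converges to (λ_k − λ_j)/(log λ_k − log λ j) as α → 1. -/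
open Filter Real Topology

/-! With `r = (b / a) ^ (1 / α)` one has `f(α) = (α - 1)(1 - r) / (r / b - 1 / a)`, and for `b < a`
`r → 0` as `α → 0⁺`, so `f(α) → a`; the general case follows since `f` is symmetric in `a, b`.
Near `α = 1`, put `β = (1 - α) / α → 0`: then `α - 1 = -αβ`, so
`f(α) = -α (a ^ (1 / α) - b ^ (1 / α)) / ((b ^ β - a ^ β) / β)`, whose denominator is a difference
quotient of `β ↦ b ^ β - a ^ β` at `0` and tends to `log b - log a`. -/

/-- `f(α)` with `a = λ_k`, `b = λ_j`. -/
noncomputable def weightCoeff (a b α : ℝ) : ℝ :=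
  (α - 1) * (a ^ (1 / α) - b ^ (1 / α)) / (b ^ ((1 - α) / α) - a ^ ((1 - α) / α))

lemma weightCoeff_comm (a b α : ℝ) : weightCoeff a b α = weightCoeff b a α := by
  rw [weightCoeff, weightCoeff, ← neg_sub (b ^ ((1 - α) / α)), div_neg, ← neg_div, ← mul_neg,
    neg_sub]

lemma rpow_one_sub_div {l : ℝ} (hl : 0 < l) {α : ℝ} (hα : α ≠ 0) :
    l ^ ((1 - α) / α) = l ^ (1 / α) / l := by
  rw [show (1 - α) / α = 1 / α - 1 by field_simp, rpow_sub hl, rpow_one]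

lemma weightCoeff_eq_ratio {a b α : ℝ} (ha : 0 < a) (hb : 0 < b) (hα : α ≠ 0) :
    weightCoeff a b α = (α - 1) * (1 - (b / a) ^ (1 / α)) / ((b / a) ^ (1 / α) / b - 1 / a) := by
  rw [weightCoeff, rpow_one_sub_div ha hα, rpow_one_sub_div hb hα, div_rpow hb.le ha.le]
  field_simp

lemma weightCoeff_eq_mul_div_slope {a b α : ℝ} (hα : α ≠ 0) :
    weightCoeff a b α = -α * (a ^ (1 / α) - b ^ (1 / α)) /
      ((b ^ ((1 - α) / α) - a ^ ((1 - α) / α)) / ((1 - α) / α)) := by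
  rw [weightCoeff, div_div_eq_mul_div, mul_right_comm, neg_mul, mul_div_cancel₀ _ hα]
  ring

lemma tendsto_rpow_one_div_nhdsGT_zero {r : ℝ} (hr₀ : 0 < r) (hr₁ : r < 1) :
    Tendsto (fun α : ℝ => r ^ (1 / α)) (𝓝[>] 0) (𝓝 0) := by
  simp only [one_div]
  exact (tendsto_rpow_atTop_of_base_lt_one r (by linarith) hr₁).comp tendsto_inv_nhdsGT_zero

lemma tendsto_rpow_sub_rpow_div {a b : ℝ} (ha : 0 < a) (hb : 0 < b) :
    Tendsto (fun β : ℝ => (a ^ β - b ^ β) / β) (𝓝[≠] 0) (𝓝 (log a - log b)) := by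
  have hd : HasDerivAt (fun β : ℝ => a ^ β - b ^ β) (log a - log b) 0 := by
    have := (hasStrictDerivAt_const_rpow ha 0).hasDerivAt.sub
      (hasStrictDerivAt_const_rpow hb 0).hasDerivAt
    rwa [rpow_zero, rpow_zero, one_mul, one_mul] at this
  refine (hasDerivAt_iff_tendsto_slope.1 hd).congr fun β => ?_
  simp [slope_def_field]

lemma tendsto_weightCoeff_nhdsGT_zero_of_lt {a b : ℝ} (hb : 0 < b) (hba : b < a) :
    Tendsto (weightCoeff a b) (𝓝[>] 0) (𝓝 a) := by
  have ha : 0 < a := hb.trans hba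
  have hr := tendsto_rpow_one_div_nhdsGT_zero (div_pos hb ha) ((div_lt_one ha).2 hba)
  have hα : Tendsto (fun α : ℝ => α - 1) (𝓝[>] 0) (𝓝 (0 - 1)) :=
    (continuous_sub_right 1).continuousWithinAt.tendsto
  have key := (hα.mul ((tendsto_const_nhds (x := 1)).sub hr)).div
    ((hr.div_const b).sub tendsto_const_nhds) (by simp [ha.ne'] : (0 : ℝ) / b - 1 / a ≠ 0)
  have hlim : (0 - 1) * (1 - 0) / (0 / b - 1 / a) = a := by simp
  rw [hlim] at key
  refine key.congr' ?_
  filter_upwards [self_mem_nhdsWithin] with α (hα : 0 < α)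
  exact (weightCoeff_eq_ratio ha hb hα.ne').symm

theorem tendsto_weightCoeff_nhdsGT_zero {a b : ℝ} (ha : 0 < a) (hb : 0 < b) (hab : a ≠ b) :
    Tendsto (weightCoeff a b) (𝓝[>] 0) (𝓝 (max a b)) := by
  rcases hab.lt_or_gt with h | h
  · rw [max_eq_right h.le, funext (weightCoeff_comm a b)]
    exact tendsto_weightCoeff_nhdsGT_zero_of_lt ha h
  · rw [max_eq_left h.le]
    exact tendsto_weightCoeff_nhdsGT_zero_of_lt hb h

lemma tendsto_one_sub_div_self_nhdsNE_one :
    Tendsto (fun α : ℝ => (1 - α) / α) (𝓝[≠] 1) (𝓝[≠] 0) := by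
  have hcont : ContinuousAt (fun α : ℝ => (1 - α) / α) 1 :=
    (continuousAt_const.sub continuousAt_id).div continuousAt_id one_ne_zero
  refine tendsto_nhdsWithin_iff.2 ⟨?_, ?_⟩
  · simpa using hcont.tendsto.mono_left nhdsWithin_le_nhds
  · filter_upwards [self_mem_nhdsWithin,
      eventually_nhdsWithin_of_eventually_nhds (eventually_ne_nhds one_ne_zero)] with α h1 h0
    exact div_ne_zero (sub_ne_zero.2 (Ne.symm h1)) h0

theorem tendsto_weightCoeff_nhdsNE_one {a b : ℝ} (ha : 0 < a) (hb : 0 < b) (hab : a ≠ b) :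
    Tendsto (weightCoeff a b) (𝓝[≠] 1) (𝓝 ((a - b) / (log a - log b))) := by
  have hlog : log b - log a ≠ 0 := sub_ne_zero.2 fun h => hab (log_injOn_pos hb ha h).symm
  have hpow {l : ℝ} (hl : 0 < l) : Tendsto (fun α : ℝ => l ^ (1 / α)) (𝓝[≠] 1) (𝓝 l) := by
    have hcont : ContinuousAt (fun α : ℝ => l ^ (1 / α)) 1 :=
      continuousAt_const.rpow (continuousAt_const.div continuousAt_id one_ne_zero) (Or.inl hl.ne')
    simpa using hcont.tendsto.mono_left nhdsWithin_le_nhds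
  have hslope := (tendsto_rpow_sub_rpow_div hb ha).comp tendsto_one_sub_div_self_nhdsNE_one
  have key := ((tendsto_neg (1 : ℝ)).mono_left nhdsWithin_le_nhds |>.mul
    ((hpow ha).sub (hpow hb))).div hslope hlog
  have hlim : -1 * (a - b) / (log b - log a) = (a - b) / (log a - log b) := by
    rw [← neg_sub (log a), div_neg, neg_one_mul, neg_div, neg_neg]
  rw [hlim] at key
  refine key.congr' ?_
  filter_upwards [eventually_nhdsWithin_of_eventually_nhds (eventually_ne_nhds one_ne_zero)]
    with α hα
  exact (weightCoeff_eq_mul_div_slope hα).symm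

/-- Limits of the weight coefficients
`f(α) = (α-1)(λk^{1/α} - λj^{1/α})/(λj^{(1-α)/α} - λk^{(1-α)/α})`:
as `α → 0⁺` it tends to `max λk λj`, and as `α → 1` it tends to
`(λk - λj)/(log λk - log λj)`. -/
theorem weight_coefficient_limits (lk lj : ℝ) (hk : 0 < lk) (hj : 0 < lj) (hne : lk ≠ lj) :
    Tendsto (fun α : ℝ =>
        (α - 1) * (lk ^ (1/α) - lj ^ (1/α)) / (lj ^ ((1 - α)/α) - lk ^ ((1 - α)/α)))
      (nhdsWithin 0 (Set.Ioi 0)) (nhds (max lk lj)) ∧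
    Tendsto (fun α : ℝ =>
        (α - 1) * (lk ^ (1/α) - lj ^ (1/α)) / (lj ^ ((1 - α)/α) - lk ^ ((1 - α)/α)))
      (nhdsWithin 1 {(1:ℝ)}ᶜ) (nhds ((lk - lj) / (Real.log lk - Real.log lj))) :=
  ⟨tendsto_weightCoeff_nhdsGT_zero hk hj hne, tendsto_weightCoeff_nhdsNE_one hk hj hne⟩
end
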